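/- Fix p ∈ (0,1), q = 1−p, a real r > 0, and an integer m ≥ 1. Then there exist a constant C > 0 and a positive integer N such that for all integers n ≥ N: | f_r(n) − (np/(np+q)^{r+1}) · Σ_{k=0}^{m−1} (−1)^k · C(r+k,k) · μ_k(n−1)/(np+q)^k | ≤ C · (np/(np+q)^{r+1}) · n^{−⌈m/2⌉}. That is, f_r(n) admits the asymptotic expansion f_r(n) = (np/(np+q)^{r+1}) { Σ_{k=0}^{m−1} (−1)^k C(r+k,k) μ_k(n−1)/(np+q)^k + O(1/n^{⌈m/2⌉}) }. -/

import Mathlib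

open Real Finset

/-!
Put `N = n - 1`, `a = np + q` and `x_i = (i - Np) / a`, so that `i + 1 = a (1 + x_i)`.
Absorption `C(n, i + 1) = n / (i + 1) · C(N, i)` turns `f_r(n)` into
`np · a^{-s} · E[(1 + x)^{-s}]` with `s = r + 1`, the expectation being over `Bin(N, p)`.
Expanding `(1 + x)^{-s}` to the even order `2h`, `h = ⌈m/2⌉`, leaves the stated sum, the terms
`m ≤ k < 2h`, and the expected Taylor remainder. The recurrence of the central moments in `N`
gives `|μ_k(N)| ≤ 3^{k²} (N+1)^{⌊k/2⌋}`, so `μ_k(N) / a^k = O(n^{-⌈k/2⌉})`. The remainder is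
`O(x^{2h})` for `x ≥ -1/2`; on the lower tail it is only polynomially large in `n`, and a high
even moment `E[(2x)^{2L}]` absorbs it.
-/

def binomialSum (p q : ℝ) (N : ℕ) (g : ℕ → ℝ) : ℝ :=
  ∑ i ∈ range (N + 1), (N.choose i : ℝ) * p ^ i * q ^ (N - i) * g i

section binomialSum

variable {p q : ℝ} {N : ℕ}

lemma binomialSum_one : binomialSum p q N (fun _ => 1) = (p + q) ^ N := by
  simp only [binomialSum, mul_one, add_pow]
  exact sum_congr rfl fun _ _ => by ring

lemma binomialSum_add (f g : ℕ → ℝ) :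
    binomialSum p q N (fun i => f i + g i) = binomialSum p q N f + binomialSum p q N g := by
  simp only [binomialSum, mul_add, sum_add_distrib]

lemma binomialSum_const_mul (c : ℝ) (g : ℕ → ℝ) :
    binomialSum p q N (fun i => c * g i) = c * binomialSum p q N g := by
  simp only [binomialSum, mul_sum]
  exact sum_congr rfl fun _ _ => by ring

lemma binomialSum_sum {ι : Type*} (s : Finset ι) (g : ι → ℕ → ℝ) :
    binomialSum p q N (fun i => ∑ k ∈ s, g k i) = ∑ k ∈ s, binomialSum p q N (g k) := by
  simp only [binomialSum, mul_sum]
  exact sum_comm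

lemma binomialSum_succ (g : ℕ → ℝ) :
    binomialSum p q (N + 1) g = binomialSum p q N (fun i => q * g i + p * g (i + 1)) := by
  have pascal := sum_antidiagonal_choose_succ_mul (R := ℝ) (fun i j => p ^ i * q ^ j * g i) N
  simp only [Nat.sum_antidiagonal_eq_sum_range_succ_mk] at pascal
  simp only [binomialSum, mul_add, sum_add_distrib]
  convert pascal using 2
  · ring
  · exact sum_congr rfl fun i _ => by ring
  · refine sum_congr rfl fun i hi => ?_
    rw [Nat.choose_symm (Nat.lt_succ_iff.mp (mem_range.mp hi))]
    ring

lemma binomialSum_mono (hp : 0 ≤ p) (hq : 0 ≤ q) {f g : ℕ → ℝ} (hfg : ∀ i ≤ N, f i ≤ g i) :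
    binomialSum p q N f ≤ binomialSum p q N g :=
  sum_le_sum fun i hi => mul_le_mul_of_nonneg_left (hfg i (Nat.lt_succ_iff.mp (mem_range.mp hi)))
    (by positivity)

lemma abs_binomialSum_le (hp : 0 ≤ p) (hq : 0 ≤ q) (g : ℕ → ℝ) :
    |binomialSum p q N g| ≤ binomialSum p q N (fun i => |g i|) := by
  refine (abs_sum_le_sum_abs _ _).trans_eq (sum_congr rfl fun i _ => ?_)
  rw [abs_mul, abs_of_nonneg (by positivity)]

end binomialSum

def binomialCentralMoment (p q : ℝ) (N k : ℕ) : ℝ :=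
  binomialSum p q N (fun i => ((i : ℝ) - N * p) ^ k)

section binomialCentralMoment

variable {p q : ℝ}

lemma binomialCentralMoment_succ (hpq : p + q = 1) (N k : ℕ) :
    binomialCentralMoment p q (N + 1) k = ∑ j ∈ range (k + 1),
      (k.choose j : ℝ) * (q * (-p) ^ j + p * q ^ j) * binomialCentralMoment p q N (k - j) := by
  have expand : ∀ y : ℝ, q * (y - p) ^ k + p * (y + q) ^ k
      = ∑ j ∈ range (k + 1), (k.choose j : ℝ) * (q * (-p) ^ j + p * q ^ j) * y ^ (k - j) := by
    intro y
    rw [sub_eq_neg_add, add_comm y, add_pow, add_pow, mul_sum, mul_sum, ← sum_add_distrib]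
    exact sum_congr rfl fun j _ => by ring
  have shift : ∀ i : ℕ, q * ((i : ℝ) - ↑(N + 1) * p) ^ k + p * ((↑(i + 1) : ℝ) - ↑(N + 1) * p) ^ k
      = q * (((i : ℝ) - N * p) - p) ^ k + p * (((i : ℝ) - N * p) + q) ^ k := by
    intro i
    rw [eq_sub_of_add_eq' hpq]
    push_cast
    ring
  simp only [binomialCentralMoment, binomialSum_succ, shift, expand, binomialSum_sum,
    binomialSum_const_mul]

lemma binomialCentralMoment_zero_right (hpq : p + q = 1) (N : ℕ) :
    binomialCentralMoment p q N 0 = 1 := by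
  simp only [binomialCentralMoment, pow_zero, binomialSum_one, hpq, one_pow]

lemma binomialCentralMoment_one_right (hpq : p + q = 1) (N : ℕ) :
    binomialCentralMoment p q N 1 = 0 := by
  induction N with
  | zero => simp [binomialCentralMoment, binomialSum]
  | succ N ih =>
    simp [binomialCentralMoment_succ hpq, sum_range_succ, ih, mul_comm p q]

lemma binomialCentralMoment_succ_add_two (hpq : p + q = 1) (N k : ℕ) :
    binomialCentralMoment p q (N + 1) (k + 2) = binomialCentralMoment p q N (k + 2) +
      ∑ j ∈ range (k + 1), ((k + 2).choose (j + 2) : ℝ) * (q * (-p) ^ (j + 2) + p * q ^ (j + 2)) *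
        binomialCentralMoment p q N (k - j) := by
  have hc0 : q * (-p) ^ 0 + p * q ^ 0 = 1 := by linear_combination hpq
  have hc1 : q * (-p) ^ (0 + 1) + p * q ^ (0 + 1) = 0 := by ring
  rw [binomialCentralMoment_succ hpq, sum_range_succ', sum_range_succ', hc0, hc1]
  simp only [mul_zero, zero_mul, add_zero, Nat.choose_zero_right, Nat.cast_one, one_mul, mul_one,
    Nat.sub_zero]
  rw [add_comm]
  refine congrArg _ (sum_congr rfl fun j _ => ?_)
  rw [show k + 2 - (j + 1 + 1) = k - j by omega]

lemma abs_mul_neg_pow_add_mul_pow_le_one (hp : 0 ≤ p) (hq : 0 ≤ q) (hpq : p + q = 1) (j : ℕ) :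
    |q * (-p) ^ j + p * q ^ j| ≤ 1 := by
  calc |q * (-p) ^ j + p * q ^ j| ≤ q * p ^ j + p * q ^ j := by
        refine (abs_add_le _ _).trans_eq ?_
        rw [abs_mul, abs_mul, abs_pow, abs_pow, abs_neg, abs_of_nonneg hp, abs_of_nonneg hq]
    _ ≤ q * 1 + p * 1 := by
        gcongr
        · exact pow_le_one₀ hp (by linarith)
        · exact pow_le_one₀ hq (by linarith)
    _ = 1 := by linarith

lemma abs_binomialCentralMoment_succ_add_two_le (hp : 0 ≤ p) (hq : 0 ≤ q) (hpq : p + q = 1)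
    (N k : ℕ) {B : ℝ} (hB : ∀ j ≤ k, |binomialCentralMoment p q N j| ≤ B) :
    |binomialCentralMoment p q (N + 1) (k + 2)| ≤
      |binomialCentralMoment p q N (k + 2)| + 2 ^ (k + 2) * B := by
  have hB0 : 0 ≤ B := (abs_nonneg _).trans (hB 0 (Nat.zero_le k))
  have hterm : ∀ j ∈ range (k + 1), |((k + 2).choose (j + 2) : ℝ) *
      (q * (-p) ^ (j + 2) + p * q ^ (j + 2)) * binomialCentralMoment p q N (k - j)| ≤
        ((k + 2).choose (j + 2) : ℝ) * B := fun j _ => by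
    rw [abs_mul, abs_mul, Nat.abs_cast, mul_assoc]
    refine mul_le_mul_of_nonneg_left ?_ (Nat.cast_nonneg _)
    simpa using mul_le_mul (abs_mul_neg_pow_add_mul_pow_le_one hp hq hpq (j + 2))
      (hB (k - j) (Nat.sub_le k j)) (abs_nonneg _) zero_le_one
  have hchoose : ∑ j ∈ range (k + 1), ((k + 2).choose (j + 2) : ℝ) ≤ 2 ^ (k + 2) := by
    have h := Nat.sum_range_choose (k + 2)
    rw [sum_range_succ', sum_range_succ'] at h
    simp only [add_assoc, Nat.reduceAdd] at h
    exact_mod_cast (by omega : ∑ j ∈ range (k + 1), (k + 2).choose (j + 2) ≤ 2 ^ (k + 2))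
  rw [binomialCentralMoment_succ_add_two hpq]
  refine (abs_add_le _ _).trans (add_le_add le_rfl ((abs_sum_le_sum_abs _ _).trans ?_))
  exact (sum_le_sum hterm).trans (by rw [← sum_mul]; gcongr)

lemma abs_binomialCentralMoment_le (hp : 0 ≤ p) (hq : 0 ≤ q) (hpq : p + q = 1) (N k : ℕ) :
    |binomialCentralMoment p q N k| ≤ 3 ^ k ^ 2 * ((N : ℝ) + 1) ^ (k / 2) := by
  induction N generalizing k with
  | zero =>
    have h0 : binomialCentralMoment p q 0 k = 0 ^ k := by simp [binomialCentralMoment, binomialSum]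
    rw [h0, abs_pow, abs_zero, Nat.cast_zero, zero_add, one_pow, mul_one]
    exact (pow_le_one₀ le_rfl zero_le_one).trans (one_le_pow₀ (by norm_num : (1 : ℝ) ≤ 3))
  | succ N ih =>
    match k with
    | 0 => simp [binomialCentralMoment_zero_right hpq]
    | 1 => simp [binomialCentralMoment_one_right hpq]
    | k + 2 =>
      set x : ℝ := (N : ℝ) + 1
      have hx : 1 ≤ x := by simp [x]
      have hB : ∀ j ≤ k, |binomialCentralMoment p q N j| ≤ 3 ^ k ^ 2 * x ^ (k / 2) := fun j hj =>
        (ih j).trans (by gcongr; norm_num)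
      have hconst : (2 : ℝ) ^ (k + 2) * 3 ^ k ^ 2 ≤ 3 ^ (k + 2) ^ 2 := by
        calc (2 : ℝ) ^ (k + 2) * 3 ^ k ^ 2 ≤ 3 ^ (k + 2) * 3 ^ k ^ 2 := by gcongr; norm_num
          _ ≤ 3 ^ (k + 2) ^ 2 := by
              rw [← pow_add]
              exact pow_le_pow_right₀ (by norm_num) (by nlinarith)
      have hgrowth : x ^ ((k + 2) / 2) + x ^ (k / 2) ≤ (x + 1) ^ ((k + 2) / 2) := by
        rw [show (k + 2) / 2 = k / 2 + 1 by omega, pow_succ, pow_succ]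
        have hx0 : 0 ≤ x := by positivity
        nlinarith [pow_le_pow_left₀ hx0 (le_add_of_nonneg_right zero_le_one) (k / 2),
          pow_nonneg hx0 (k / 2)]
      calc _ ≤ 3 ^ (k + 2) ^ 2 * x ^ ((k + 2) / 2) + 2 ^ (k + 2) * (3 ^ k ^ 2 * x ^ (k / 2)) :=
            (abs_binomialCentralMoment_succ_add_two_le hp hq hpq N k hB).trans
              (add_le_add (ih _) le_rfl)
        _ ≤ 3 ^ (k + 2) ^ 2 * (x ^ ((k + 2) / 2) + x ^ (k / 2)) := by
            rw [mul_add, ← mul_assoc]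
            gcongr
        _ ≤ 3 ^ (k + 2) ^ 2 * (((N + 1 : ℕ) : ℝ) + 1) ^ ((k + 2) / 2) := by
            push_cast
            gcongr

end binomialCentralMoment

-- `negBinomCoeff s k = C(s + k - 1, k)`, so the statement's `C(r + k, k)` is
-- `negBinomCoeff (r + 1) k`.
noncomputable def negBinomCoeff (s : ℝ) (k : ℕ) : ℝ := (∏ j ∈ range k, (s + j)) / k.factorial

noncomputable def rpowNegRemainder (s : ℝ) (M : ℕ) (x : ℝ) : ℝ :=
  (1 + x) ^ (-s) - ∑ k ∈ range M, (-1) ^ k * negBinomCoeff s k * x ^ k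

lemma negBinomCoeff_zero_right (s : ℝ) : negBinomCoeff s 0 = 1 := by simp [negBinomCoeff]

lemma negBinomCoeff_nonneg {s : ℝ} (hs : 0 ≤ s) (k : ℕ) : 0 ≤ negBinomCoeff s k := by
  unfold negBinomCoeff; positivity

lemma prod_range_succ_add_natCast (s : ℝ) (k : ℕ) :
    ∏ j ∈ range (k + 1), (s + j) = s * ∏ j ∈ range k, (s + 1 + j) := by
  rw [prod_range_succ']
  push_cast
  simp only [add_zero, ← add_assoc, add_right_comm s]
  ring

lemma negBinomCoeff_succ_mul (s : ℝ) (k : ℕ) :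
    negBinomCoeff s (k + 1) * (k + 1) = s * negBinomCoeff (s + 1) k := by
  simp only [negBinomCoeff, prod_range_succ_add_natCast, Nat.factorial_succ]
  push_cast
  field_simp

lemma hasDerivAt_rpowNegRemainder (s : ℝ) (M : ℕ) {x : ℝ} (hx : 0 < 1 + x) :
    HasDerivAt (rpowNegRemainder s (M + 1)) (-s * rpowNegRemainder (s + 1) M x) x := by
  have hpow : HasDerivAt (fun y : ℝ => (1 + y) ^ (-s)) (-s * (1 + x) ^ (-s - 1)) x := by
    simpa using ((hasDerivAt_id x).const_add 1).rpow_const (p := -s) (Or.inl hx.ne')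
  have hpoly : HasDerivAt (fun y : ℝ => ∑ k ∈ range (M + 1), (-1) ^ k * negBinomCoeff s k * y ^ k)
      (∑ k ∈ range (M + 1), (-1) ^ k * negBinomCoeff s k * (k * x ^ (k - 1))) x :=
    HasDerivAt.fun_sum fun k _ => (hasDerivAt_pow k x).const_mul _
  refine (hpow.sub hpoly).congr_deriv ?_
  have hterm : ∀ k : ℕ,
      (-1) ^ (k + 1) * negBinomCoeff s (k + 1) * (((k + 1 : ℕ) : ℝ) * x ^ (k + 1 - 1)) =
        -s * ((-1) ^ k * negBinomCoeff (s + 1) k * x ^ k) := by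
    intro k
    rw [Nat.add_sub_cancel, pow_succ]
    push_cast
    linear_combination (-(-1) ^ k * x ^ k) * negBinomCoeff_succ_mul s k
  rw [rpowNegRemainder, sum_range_succ']
  simp only [hterm, ← mul_sum, Nat.cast_zero, zero_mul, mul_zero, add_zero]
  rw [show -(s + 1) = -s - 1 by ring]
  ring

lemma rpowNegRemainder_succ_zero (s : ℝ) (M : ℕ) : rpowNegRemainder s (M + 1) 0 = 0 := by
  simp [rpowNegRemainder, sum_range_succ', negBinomCoeff_zero_right]

lemma abs_rpowNegRemainder_le (M : ℕ) : ∀ {s x : ℝ}, 0 ≤ s → -1 / 2 ≤ x →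
    |rpowNegRemainder s M x| ≤ (∏ j ∈ range M, (s + j)) * 2 ^ (s + M) * |x| ^ M := by
  induction M with
  | zero =>
    intro s x hs hx
    simp only [rpowNegRemainder, range_zero, sum_empty, sub_zero, prod_empty, Nat.cast_zero,
      add_zero, pow_zero, one_mul, mul_one]
    rw [abs_of_nonneg (rpow_nonneg (by linarith) _)]
    calc (1 + x) ^ (-s) ≤ (1 / 2) ^ (-s) :=
          rpow_le_rpow_of_nonpos (by norm_num) (by linarith) (by linarith)
      _ = 2 ^ s := by rw [one_div, inv_rpow (by norm_num), rpow_neg (by norm_num), inv_inv]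
  | succ M ih =>
    intro s x hs hx
    have hsub : ∀ t ∈ Set.uIcc 0 x, -1 / 2 ≤ t ∧ |t| ≤ |x| := fun t ht => by
      refine ⟨?_, by simpa using Set.abs_sub_left_of_mem_uIcc ht⟩
      rcases Set.mem_uIcc.mp ht with h | h <;> linarith [h.1]
    have hderiv : ∀ t ∈ Set.uIcc 0 x, HasDerivWithinAt (rpowNegRemainder s (M + 1))
        (-s * rpowNegRemainder (s + 1) M t) (Set.uIcc 0 x) t := fun t ht =>
      (hasDerivAt_rpowNegRemainder s M (by linarith [(hsub t ht).1])).hasDerivWithinAt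
    have hbound : ∀ t ∈ Set.uIcc 0 x, ‖-s * rpowNegRemainder (s + 1) M t‖
        ≤ s * ((∏ j ∈ range M, (s + 1 + j)) * 2 ^ (s + 1 + M) * |x| ^ M) := fun t ht => by
      rw [norm_mul, norm_neg, Real.norm_eq_abs, Real.norm_eq_abs, abs_of_nonneg hs]
      gcongr
      refine (ih (by linarith) (hsub t ht).1).trans ?_
      exact mul_le_mul_of_nonneg_left (pow_le_pow_left₀ (abs_nonneg t) (hsub t ht).2 M)
        (by positivity)
    have hmvt := Convex.norm_image_sub_le_of_norm_hasDerivWithin_le hderiv hbound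
      (convex_uIcc 0 x) Set.left_mem_uIcc Set.right_mem_uIcc
    rw [rpowNegRemainder_succ_zero, sub_zero, sub_zero, Real.norm_eq_abs, Real.norm_eq_abs] at hmvt
    refine hmvt.trans_eq ?_
    rw [prod_range_succ_add_natCast, pow_succ]
    push_cast
    ring_nf

lemma abs_rpowNegRemainder_le_of_nonpos {s a x : ℝ} (hs : 0 ≤ s) (ha : 0 < a)
    (hax : 1 ≤ a * (1 + x)) (hx : x ≤ 0) (M : ℕ) :
    |rpowNegRemainder s M x| ≤ a ^ s + ∑ k ∈ range M, negBinomCoeff s k := by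
  have h1x : 1 / a ≤ 1 + x := by rw [div_le_iff₀ ha]; linarith
  have hx1 : |x| ≤ 1 := abs_le.mpr ⟨by linarith [one_div_pos.mpr ha], by linarith⟩
  rw [rpowNegRemainder]
  refine (abs_sub _ _).trans (add_le_add ?_ ?_)
  · rw [abs_of_nonneg (rpow_nonneg (by linarith [one_div_pos.mpr ha]) _)]
    calc (1 + x) ^ (-s) ≤ (1 / a) ^ (-s) :=
          rpow_le_rpow_of_nonpos (by positivity) h1x (by linarith)
      _ = a ^ s := by rw [one_div, inv_rpow ha.le, rpow_neg ha.le, inv_inv]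
  · refine (abs_sum_le_sum_abs _ _).trans (sum_le_sum fun k _ => ?_)
    rw [abs_mul, abs_mul, abs_pow, abs_neg, abs_one, one_pow, one_mul, abs_pow,
      abs_of_nonneg (negBinomCoeff_nonneg hs k)]
    exact mul_le_of_le_one_right (negBinomCoeff_nonneg hs k) (pow_le_one₀ (abs_nonneg x) hx1)

lemma abs_rpowNegRemainder_le_add {s a x : ℝ} (hs : 0 ≤ s) (ha : 0 < a) (hax : 1 ≤ a * (1 + x))
    (h L : ℕ) :
    |rpowNegRemainder s (2 * h) x| ≤ (∏ j ∈ range (2 * h), (s + j)) * 2 ^ (s + (2 * h : ℕ)) *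
        x ^ (2 * h) + (a ^ s + ∑ k ∈ range (2 * h), negBinomCoeff s k) * (2 * x) ^ (2 * L) := by
  have hsum : 0 ≤ ∑ k ∈ range (2 * h), negBinomCoeff s k :=
    sum_nonneg fun k _ => negBinomCoeff_nonneg hs k
  rcases le_or_gt (-1 / 2) x with hx | hx
  · calc _ ≤ (∏ j ∈ range (2 * h), (s + j)) * 2 ^ (s + (2 * h : ℕ)) * |x| ^ (2 * h) :=
          abs_rpowNegRemainder_le _ hs hx
      _ = (∏ j ∈ range (2 * h), (s + j)) * 2 ^ (s + (2 * h : ℕ)) * x ^ (2 * h) := by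
          rw [(even_two_mul h).pow_abs]
      _ ≤ _ := le_add_of_nonneg_right (mul_nonneg (by positivity) ((even_two_mul L).pow_nonneg _))
  · have h2x : 1 ≤ (2 * x) ^ (2 * L) := by
      rw [pow_mul]
      exact one_le_pow₀ (by nlinarith)
    calc _ ≤ a ^ s + ∑ k ∈ range (2 * h), negBinomCoeff s k :=
          abs_rpowNegRemainder_le_of_nonpos hs ha hax (by linarith) _
      _ ≤ (a ^ s + ∑ k ∈ range (2 * h), negBinomCoeff s k) * (2 * x) ^ (2 * L) :=
          le_mul_of_one_le_right (by positivity) h2x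
      _ ≤ _ := le_add_of_nonneg_left (mul_nonneg (by positivity) ((even_two_mul h).pow_nonneg _))

lemma sum_Icc_choose_div_rpow_eq (p q r : ℝ) (N : ℕ) :
    ∑ i ∈ Icc 1 (N + 1), ((N + 1).choose i : ℝ) * p ^ i * q ^ (N + 1 - i) / (i : ℝ) ^ r =
      ((N : ℝ) + 1) * p * binomialSum p q N (fun i => ((i : ℝ) + 1) ^ (-(r + 1))) := by
  rw [← Ico_add_one_right_eq_Icc, ← sum_Ico_add' _ 0 (N + 1) 1, ← range_eq_Ico, binomialSum,
    mul_sum]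
  refine sum_congr rfl fun i _ => ?_
  have hchoose : ((N + 1).choose (i + 1) : ℝ) * ((i : ℝ) + 1) = ((N : ℝ) + 1) * N.choose i := by
    exact_mod_cast (Nat.add_one_mul_choose_eq N i).symm
  have hi : (0 : ℝ) < (i : ℝ) + 1 := by positivity
  rw [Nat.add_sub_add_right, rpow_neg hi.le, rpow_add hi, rpow_one]
  push_cast
  field_simp
  linear_combination p * p ^ i * q ^ (N - i) * hchoose

section expansion

variable {p q : ℝ}

lemma binomialSum_sub_div_pow (N k : ℕ) (a : ℝ) :
    binomialSum p q N (fun i => (((i : ℝ) - N * p) / a) ^ k) =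
      binomialCentralMoment p q N k / a ^ k := by
  simp only [binomialCentralMoment, div_pow, div_eq_inv_mul _ (a ^ k), binomialSum_const_mul]

lemma rpow_mul_binomialSum_add_one_rpow_neg (hp : 0 ≤ p) (hpq : p + q = 1) (N : ℕ) (s : ℝ) :
    (((N : ℝ) + 1) * p + q) ^ s * binomialSum p q N (fun i => ((i : ℝ) + 1) ^ (-s)) =
      binomialSum p q N (fun i => (1 + ((i : ℝ) - N * p) / (((N : ℝ) + 1) * p + q)) ^ (-s)) := by
  set a := ((N : ℝ) + 1) * p + q
  have ha : 0 < a := by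
    rw [show a = N * p + 1 by linear_combination hpq]
    positivity
  rw [← binomialSum_const_mul]
  congr 1
  ext i
  have hi : (0 : ℝ) < (i : ℝ) + 1 := by positivity
  rw [show 1 + ((i : ℝ) - N * p) / a = ((i : ℝ) + 1) / a by field_simp; linear_combination hpq,
    div_rpow hi.le ha.le, rpow_neg ha.le, div_inv_eq_mul, mul_comm]

lemma binomialSum_one_add_rpow_neg_eq (N M : ℕ) (s a : ℝ) :
    binomialSum p q N (fun i => (1 + ((i : ℝ) - N * p) / a) ^ (-s)) =
      ∑ k ∈ range M, (-1) ^ k * negBinomCoeff s k * binomialCentralMoment p q N k / a ^ k +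
        binomialSum p q N (fun i => rpowNegRemainder s M (((i : ℝ) - N * p) / a)) := by
  have hsplit : ∀ y : ℝ, (1 + y) ^ (-s) =
      ∑ k ∈ range M, (-1) ^ k * negBinomCoeff s k * y ^ k + rpowNegRemainder s M y := by
    intro y
    rw [rpowNegRemainder, add_sub_cancel]
  simp only [hsplit, binomialSum_add, binomialSum_sum, binomialSum_const_mul,
    binomialSum_sub_div_pow, mul_div_assoc]

end expansion

section estimates

variable {p q : ℝ}

lemma abs_binomialCentralMoment_div_pow_le (hp : 0 < p) (hq : 0 ≤ q) (hpq : p + q = 1)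
    {N : ℕ} {a : ℝ} (ha : ((N : ℝ) + 1) * p ≤ a) (k : ℕ) :
    |binomialCentralMoment p q N k| / a ^ k ≤
      3 ^ k ^ 2 / p ^ k / ((N : ℝ) + 1) ^ ((k + 1) / 2) := by
  set n : ℝ := (N : ℝ) + 1
  have hn : 0 < n := by positivity
  have hsplit : n ^ k = n ^ (k / 2) * n ^ ((k + 1) / 2) := by
    rw [← pow_add]
    congr 1
    omega
  calc |binomialCentralMoment p q N k| / a ^ k ≤ 3 ^ k ^ 2 * n ^ (k / 2) / (n * p) ^ k :=
        div_le_div₀ (by positivity) (abs_binomialCentralMoment_le hp.le hq hpq N k)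
          (by positivity) (pow_le_pow_left₀ (by positivity) ha k)
    _ = 3 ^ k ^ 2 / p ^ k / n ^ ((k + 1) / 2) := by
        rw [mul_pow, hsplit]
        field_simp

lemma abs_sum_Ico_binomialCentralMoment_le (hp : 0 < p) (hq : 0 ≤ q) (hpq : p + q = 1)
    {s : ℝ} (hs : 0 ≤ s) {N : ℕ} {a : ℝ} (ha : ((N : ℝ) + 1) * p ≤ a) (m M : ℕ) :
    |∑ k ∈ Ico m M, (-1) ^ k * negBinomCoeff s k * binomialCentralMoment p q N k / a ^ k| ≤
      (∑ k ∈ Ico m M, negBinomCoeff s k * (3 ^ k ^ 2 / p ^ k)) /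
        ((N : ℝ) + 1) ^ ((m + 1) / 2) := by
  have ha0 : 0 < a := (by positivity : 0 < ((N : ℝ) + 1) * p).trans_le ha
  rw [sum_div]
  refine (abs_sum_le_sum_abs _ _).trans (sum_le_sum fun k hk => ?_)
  rw [abs_div, abs_mul, abs_mul, abs_pow, abs_neg, abs_one, one_pow, one_mul,
    abs_of_nonneg (negBinomCoeff_nonneg hs k), abs_of_pos (pow_pos ha0 k), mul_div_assoc,
    mul_div_assoc]
  refine mul_le_mul_of_nonneg_left ((abs_binomialCentralMoment_div_pow_le hp hq hpq ha k).trans ?_)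
    (negBinomCoeff_nonneg hs k)
  gcongr
  · simp
  · exact (mem_Ico.mp hk).1

lemma abs_binomialSum_rpowNegRemainder_le (hp : 0 ≤ p) (hp1 : p ≤ 1) (hpq : p + q = 1)
    {s : ℝ} (hs : 0 ≤ s) (N h L : ℕ) :
    |binomialSum p q N (fun i =>
      rpowNegRemainder s (2 * h) (((i : ℝ) - N * p) / (((N : ℝ) + 1) * p + q)))| ≤
        (∏ j ∈ range (2 * h), (s + j)) * 2 ^ (s + (2 * h : ℕ)) *
          (binomialCentralMoment p q N (2 * h) / (((N : ℝ) + 1) * p + q) ^ (2 * h)) +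
        (1 + ∑ k ∈ range (2 * h), negBinomCoeff s k) * ((N : ℝ) + 1) ^ ⌈s⌉₊ * 4 ^ L *
          (binomialCentralMoment p q N (2 * L) / (((N : ℝ) + 1) * p + q) ^ (2 * L)) := by
  set K := (∏ j ∈ range (2 * h), (s + j)) * 2 ^ (s + (2 * h : ℕ))
  set D := ∑ k ∈ range (2 * h), negBinomCoeff s k
  set n : ℝ := (N : ℝ) + 1
  set a := n * p + q
  set x : ℕ → ℝ := fun i => ((i : ℝ) - N * p) / a
  have hq : 0 ≤ q := by linarith
  have hD : 0 ≤ D := sum_nonneg fun k _ => negBinomCoeff_nonneg hs k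
  have hn : 1 ≤ n := by simp [n]
  have ha : a = N * p + 1 := by linear_combination hpq
  have ha0 : 0 < a := by rw [ha]; positivity
  have hax : ∀ i : ℕ, 1 ≤ a * (1 + x i) := fun i => by
    rw [mul_add, mul_div_cancel₀ _ ha0.ne', ha]
    linarith [(Nat.cast_nonneg i : (0 : ℝ) ≤ i)]
  have hpow : a ^ s + D ≤ (1 + D) * n ^ ⌈s⌉₊ := by
    have h1 : a ^ s ≤ n ^ ⌈s⌉₊ :=
      calc a ^ s ≤ n ^ s := rpow_le_rpow ha0.le (by rw [ha]; nlinarith) hs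
        _ ≤ n ^ (⌈s⌉₊ : ℝ) := rpow_le_rpow_of_exponent_le hn (Nat.le_ceil s)
        _ = n ^ ⌈s⌉₊ := rpow_natCast n _
    have h2 : D ≤ D * n ^ ⌈s⌉₊ := le_mul_of_one_le_right hD (one_le_pow₀ hn)
    linarith
  have hpt : ∀ i ≤ N, |rpowNegRemainder s (2 * h) (x i)| ≤
      K * x i ^ (2 * h) + (1 + D) * n ^ ⌈s⌉₊ * 4 ^ L * x i ^ (2 * L) := fun i _ => by
    refine (abs_rpowNegRemainder_le_add hs ha0 (hax i) h L).trans ?_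
    rw [mul_pow, pow_mul (2 : ℝ), ← mul_assoc, show (2 : ℝ) ^ 2 = 4 by norm_num]
    gcongr
    exact (even_two_mul L).pow_nonneg _
  calc _ ≤ binomialSum p q N (fun i => |rpowNegRemainder s (2 * h) (x i)|) :=
        abs_binomialSum_le hp hq _
    _ ≤ binomialSum p q N
          (fun i => K * x i ^ (2 * h) + (1 + D) * n ^ ⌈s⌉₊ * 4 ^ L * x i ^ (2 * L)) :=
        binomialSum_mono hp hq hpt
    _ = _ := by simp only [x, binomialSum_add, binomialSum_const_mul, binomialSum_sub_div_pow]

lemma exists_abs_binomialSum_rpowNegRemainder_le (hp : 0 < p) (hp1 : p ≤ 1) (hpq : p + q = 1)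
    {s : ℝ} (hs : 0 ≤ s) (h : ℕ) :
    ∃ C > 0, ∀ N : ℕ, |binomialSum p q N (fun i =>
      rpowNegRemainder s (2 * h) (((i : ℝ) - N * p) / (((N : ℝ) + 1) * p + q)))| ≤
        C / ((N : ℝ) + 1) ^ h := by
  -- `L` is large enough that `n ^ (-L)` beats the factor `a ^ s ≤ n ^ ⌈s⌉₊` of the lower tail.
  set L := ⌈s⌉₊ + h
  set K := (∏ j ∈ range (2 * h), (s + j)) * 2 ^ (s + (2 * h : ℕ))
  set D := ∑ k ∈ range (2 * h), negBinomCoeff s k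
  have hD : 0 ≤ D := sum_nonneg fun k _ => negBinomCoeff_nonneg hs k
  refine ⟨K * (3 ^ (2 * h) ^ 2 / p ^ (2 * h)) + (1 + D) * 4 ^ L * (3 ^ (2 * L) ^ 2 / p ^ (2 * L)),
    by positivity, fun N => ?_⟩
  set n : ℝ := (N : ℝ) + 1
  have hn : 0 < n := by positivity
  have hq : 0 ≤ q := by linarith
  have hmom : ∀ k, binomialCentralMoment p q N k / (n * p + q) ^ k ≤
      3 ^ k ^ 2 / p ^ k / n ^ ((k + 1) / 2) := fun k =>
    (div_le_div_of_nonneg_right (le_abs_self _) (by positivity)).trans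
      (abs_binomialCentralMoment_div_pow_le hp hq hpq (by linarith) k)
  have h2h := hmom (2 * h)
  have h2L := hmom (2 * L)
  rw [show (2 * h + 1) / 2 = h by omega] at h2h
  rw [show (2 * L + 1) / 2 = L by omega] at h2L
  calc _ ≤ _ := abs_binomialSum_rpowNegRemainder_le hp.le hp1 hpq hs N h L
    _ ≤ K * (3 ^ (2 * h) ^ 2 / p ^ (2 * h) / n ^ h) +
          (1 + D) * n ^ ⌈s⌉₊ * 4 ^ L * (3 ^ (2 * L) ^ 2 / p ^ (2 * L) / n ^ L) := by
        gcongr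
    _ = _ := by
        rw [show n ^ L = n ^ ⌈s⌉₊ * n ^ h from pow_add _ _ _]
        field_simp

lemma exists_abs_rpow_mul_binomialSum_sub_le (hp : 0 < p) (hp1 : p ≤ 1)
    (hpq : p + q = 1) {s : ℝ} (hs : 0 ≤ s) (m : ℕ) :
    ∃ C > 0, ∀ N : ℕ,
      |(((N : ℝ) + 1) * p + q) ^ s * binomialSum p q N (fun i => ((i : ℝ) + 1) ^ (-s)) -
        ∑ k ∈ range m, (-1) ^ k * negBinomCoeff s k * binomialCentralMoment p q N k /
          (((N : ℝ) + 1) * p + q) ^ k| ≤ C / ((N : ℝ) + 1) ^ ((m + 1) / 2) := by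
  set h := (m + 1) / 2
  obtain ⟨C, hC, hrem⟩ := exists_abs_binomialSum_rpowNegRemainder_le hp hp1 hpq hs h
  have htail : 0 ≤ ∑ k ∈ Ico m (2 * h), negBinomCoeff s k * (3 ^ k ^ 2 / p ^ k) :=
    sum_nonneg fun k _ => mul_nonneg (negBinomCoeff_nonneg hs k) (by positivity)
  refine ⟨(∑ k ∈ Ico m (2 * h), negBinomCoeff s k * (3 ^ k ^ 2 / p ^ k)) + C,
    add_pos_of_nonneg_of_pos htail hC, fun N => ?_⟩
  rw [rpow_mul_binomialSum_add_one_rpow_neg hp.le hpq, binomialSum_one_add_rpow_neg_eq N (2 * h),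
    ← sum_range_add_sum_Ico _ (show m ≤ 2 * h by omega), add_assoc, add_sub_cancel_left, add_div]
  exact (abs_add_le _ _).trans (add_le_add
    (abs_sum_Ico_binomialCentralMoment_le hp (by linarith) hpq hs (by linarith) m (2 * h))
    (hrem N))

lemma exists_abs_sum_Icc_choose_div_rpow_sub_le (hp : 0 < p) (hp1 : p ≤ 1)
    (hpq : p + q = 1) {r : ℝ} (hr : -1 ≤ r) (m : ℕ) :
    ∃ C > 0, ∀ N : ℕ,
      |∑ i ∈ Icc 1 (N + 1), ((N + 1).choose i : ℝ) * p ^ i * q ^ (N + 1 - i) / (i : ℝ) ^ r -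
        ((N : ℝ) + 1) * p / (((N : ℝ) + 1) * p + q) ^ (r + 1) * ∑ k ∈ range m,
          (-1) ^ k * negBinomCoeff (r + 1) k * binomialCentralMoment p q N k /
            (((N : ℝ) + 1) * p + q) ^ k| ≤
        C * (((N : ℝ) + 1) * p / (((N : ℝ) + 1) * p + q) ^ (r + 1)) /
          ((N : ℝ) + 1) ^ ((m + 1) / 2) := by
  obtain ⟨C, hC, hbound⟩ :=
    exists_abs_rpow_mul_binomialSum_sub_le hp hp1 hpq (by linarith : 0 ≤ r + 1) m
  refine ⟨C, hC, fun N => ?_⟩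
  rw [sum_Icc_choose_div_rpow_eq]
  set a := ((N : ℝ) + 1) * p + q
  set B := binomialSum p q N (fun i => ((i : ℝ) + 1) ^ (-(r + 1)))
  set S := ∑ k ∈ range m, (-1) ^ k * negBinomCoeff (r + 1) k * binomialCentralMoment p q N k / a ^ k
  have ha : 0 < a ^ (r + 1) :=
    rpow_pos_of_pos (by rw [show a = N * p + 1 by linear_combination hpq]; positivity) _
  have hw : 0 < ((N : ℝ) + 1) * p / a ^ (r + 1) := div_pos (by positivity) ha
  have hfactor : ((N : ℝ) + 1) * p * B - ((N : ℝ) + 1) * p / a ^ (r + 1) * S =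
      ((N : ℝ) + 1) * p / a ^ (r + 1) * (a ^ (r + 1) * B - S) := by
    field_simp
  rw [hfactor, abs_mul, abs_of_pos hw]
  calc _ ≤ ((N : ℝ) + 1) * p / a ^ (r + 1) * (C / ((N : ℝ) + 1) ^ ((m + 1) / 2)) :=
        mul_le_mul_of_nonneg_left (hbound N) hw.le
    _ = _ := by ring

end estimates

theorem inverse_moment_binomial_asymptotic_expansion_general
    (p q : ℝ) (hp : p ∈ Set.Ioo (0:ℝ) 1) (hq : q = 1 - p)
    (r : ℝ) (hr : 0 < r) (m : ℕ) :
    ∃ C > (0:ℝ), ∃ N : ℕ, 0 < N ∧ ∀ n : ℕ, N ≤ n →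
      |(∑ i ∈ Finset.Icc 1 n, (n.choose i : ℝ) * p ^ i * q ^ (n - i) / (i : ℝ) ^ r)
        - ((n : ℝ) * p / ((n : ℝ) * p + q) ^ (r + 1)) *
            ∑ k ∈ Finset.range m, (-1 : ℝ) ^ k *
              ((∏ j ∈ Finset.range k, (r + (j : ℝ) + 1)) / (Nat.factorial k : ℝ)) *
              (∑ i ∈ Finset.range n,
                ((n - 1).choose i : ℝ) * p ^ i * q ^ (n - 1 - i)
                  * ((i : ℝ) - ((n : ℝ) - 1) * p) ^ k)
              / ((n : ℝ) * p + q) ^ k|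
      ≤ C * ((n : ℝ) * p / ((n : ℝ) * p + q) ^ (r + 1)) / (n : ℝ) ^ ((m + 1) / 2) := by
  obtain ⟨hp0, hp1⟩ := hp
  obtain ⟨C, hC, hbound⟩ := exists_abs_sum_Icc_choose_div_rpow_sub_le hp0 hp1.le
    (by rw [hq]; ring : p + q = 1) (by linarith : -1 ≤ r) m
  refine ⟨C, hC, 1, one_pos, fun n hn => ?_⟩
  obtain ⟨N, rfl⟩ : ∃ N, n = N + 1 := ⟨n - 1, by omega⟩
  have hcoeff : ∀ k : ℕ, (∏ j ∈ range k, (r + (j : ℝ) + 1)) / (k.factorial : ℝ) =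
      negBinomCoeff (r + 1) k := fun k => by
    rw [negBinomCoeff, prod_congr rfl fun (j : ℕ) _ => (by ring : r + (j : ℝ) + 1 = r + 1 + j)]
  simp only [Nat.cast_add, Nat.cast_one, Nat.add_sub_cancel, add_sub_cancel_right, hcoeff]
  exact hbound N

/-- Asymptotic expansion of the `r`-th inverse moment of the positive binomial
distribution: `f_r(n) = (np/(np+q)^{r+1}) { Σ_{k=0}^{m-1} (-1)^k C(r+k,k) μ_k(n-1)/(np+q)^k
+ O(1/n^{⌈m/2⌉}) }`. -/
theorem inverse_moment_binomial_asymptotic_expansion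
    (p q : ℝ) (hp : p ∈ Set.Ioo (0:ℝ) 1) (hq : q = 1 - p)
    (r : ℝ) (hr : 0 < r) (m : ℕ) (hm : 1 ≤ m) :
    ∃ C > (0:ℝ), ∃ N : ℕ, 0 < N ∧ ∀ n : ℕ, N ≤ n →
      |(∑ i ∈ Finset.Icc 1 n, (n.choose i : ℝ) * p ^ i * q ^ (n - i) / (i : ℝ) ^ r)
        - ((n : ℝ) * p / ((n : ℝ) * p + q) ^ (r + 1)) *
            ∑ k ∈ Finset.range m, (-1 : ℝ) ^ k *
              ((∏ j ∈ Finset.range k, (r + (j : ℝ) + 1)) / (Nat.factorial k : ℝ)) *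
              (∑ i ∈ Finset.range n,
                ((n - 1).choose i : ℝ) * p ^ i * q ^ (n - 1 - i)
                  * ((i : ℝ) - ((n : ℝ) - 1) * p) ^ k)
              / ((n : ℝ) * p + q) ^ k|
      ≤ C * ((n : ℝ) * p / ((n : ℝ) * p + q) ^ (r + 1)) / (n : ℝ) ^ ((m + 1) / 2) :=
  inverse_moment_binomial_asymptotic_expansion_general p q hp hq r hr m
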